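/- For every n with 4 ≤ n ≤ 9, f(n) = ⌈n/3⌉. -/

import Mathlib

open Finset

/-- The union of the first `k` sets in the ordering `π` (positions `1,…,k`,
i.e. 0-based indices `< k`). -/
def unionUpTo {α : Type*} [DecidableEq α] {m : ℕ} (X : Fin m → Finset α)
    (π : Equiv.Perm (Fin m)) (k : ℕ) : Finset α :=
  (Finset.univ.filter (fun i : Fin m => (i : ℕ) < k)).biUnion (fun i => X (π i))

/-- `Δ(𝒳,π,k) = |X_{π(1)} ∪ ⋯ ∪ X_{π(k)}| − k`. -/
def delta {α : Type*} [DecidableEq α] {m : ℕ} (X : Fin m → Finset α)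
    (π : Equiv.Perm (Fin m)) (k : ℕ) : ℤ :=
  ((unionUpTo X π k).card : ℤ) - k

/-- `Δ(𝒳,π) = max_{1 ≤ k ≤ m} Δ(𝒳,π,k)`. -/
noncomputable def DeltaPerm {α : Type*} [DecidableEq α] {m : ℕ} (X : Fin m → Finset α)
    (π : Equiv.Perm (Fin m)) : ℤ :=
  sSup {d : ℤ | ∃ k : ℕ, 1 ≤ k ∧ k ≤ m ∧ d = delta X π k}

/-- `Δ(𝒳) = min_π Δ(𝒳,π)`. -/
noncomputable def DeltaMin {α : Type*} [DecidableEq α] {m : ℕ} (X : Fin m → Finset α) : ℤ :=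
  sInf {d : ℤ | ∃ π : Equiv.Perm (Fin m), d = DeltaPerm X π}

/-- `f_c(n,m) = max_{𝒳 ∈ S(n,m,c)} Δ(𝒳)`, families of `m` subsets of an
`n`-element ground set, each of size at most `c`. -/
noncomputable def fFam (n m c : ℕ) : ℤ :=
  sSup {d : ℤ | ∃ X : Fin m → Finset (Fin n), (∀ i, (X i).card ≤ c) ∧ d = DeltaMin X}

/-!
Order the family backwards: repeatedly remove a member so that the remaining `k` members cover at
most `k + t` points, where `n ≤ 3t` and `t ≥ 2`. This can only get stuck when every point of the
union is covered at least twice, which by double counting forces `k = 2t` and a union of all `3t`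
points. One step earlier such a dead end can always be avoided: otherwise every point would be
covered three times by the `2t + 1` remaining triples, which cover at least `3t` points.
The matching lower bounds come from explicit families: `n` copies of one triple for `n ≤ 6`, and
the translates of `{0, 1, 3}` modulo `n` for `7 ≤ n ≤ 9`, any two of which cover five points.
-/

section Stuck

variable {ι α : Type*} [DecidableEq α] {X : ι → Finset α} {S : Finset ι} {t : ℕ}

lemma card_biUnion_mul_le {a c : ℕ} (hX : ∀ i, #(X i) ≤ c)
    (hcover : ∀ p ∈ S.biUnion X, a ≤ #{i ∈ S | p ∈ X i}) :
    #(S.biUnion X) * a ≤ #S * c :=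
  card_mul_le_card_mul (fun p i => p ∈ X i) hcover fun i _ =>
    (card_le_card fun _ hp => (mem_filter.1 hp).2).trans (hX i)

variable [DecidableEq ι]

def IsStuck (X : ι → Finset α) (t : ℕ) (S : Finset ι) : Prop :=
  #(S.biUnion X) = #S + t ∧ ∀ i ∈ S, (S.erase i).biUnion X = S.biUnion X

lemma two_le_card_filter_mem (h : ∀ i ∈ S, (S.erase i).biUnion X = S.biUnion X) {p : α}
    (hp : p ∈ S.biUnion X) : 2 ≤ #{i ∈ S | p ∈ X i} := by
  obtain ⟨i, hi, hpi⟩ := mem_biUnion.1 hp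
  obtain ⟨j, hj, hpj⟩ := mem_biUnion.1 (h i hi ▸ hp)
  exact one_lt_card.2 ⟨j, mem_filter.2 ⟨mem_of_mem_erase hj, hpj⟩,
    i, mem_filter.2 ⟨hi, hpi⟩, ne_of_mem_erase hj⟩

lemma IsStuck.card_eq [Fintype α] (hX : ∀ i, #(X i) ≤ 3) (hα : Fintype.card α ≤ 3 * t)
    (h : IsStuck X t S) : #S = 2 * t := by
  have hcount := card_biUnion_mul_le hX fun p hp => two_le_card_filter_mem h.2 hp
  have huniv := card_le_univ (S.biUnion X)
  have := h.1
  omega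

/-- The point is still covered once some other member is removed, so it lies in two members
`i₁ ≠ i₂`; removing `i₁` then still leaves two. -/
lemma three_le_card_filter_mem (hS : 2 ≤ #S) (h : ∀ i ∈ S, IsStuck X t (S.erase i)) {p : α}
    (hp : p ∈ S.biUnion X) : 3 ≤ #{i ∈ S | p ∈ X i} := by
  have herase : ∀ i ∈ S, p ∈ (S.erase i).biUnion X → 2 ≤ #({i' ∈ S | p ∈ X i'}.erase i) :=
    fun i hi hpi => by
      rw [← filter_erase]
      exact two_le_card_filter_mem (h i hi).2 hpi
  obtain ⟨i₁, hi₁, hpi₁⟩ := mem_biUnion.1 hp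
  obtain ⟨j, hj, hji₁⟩ := exists_mem_ne hS i₁
  have hcover : 2 ≤ #{i ∈ S | p ∈ X i} :=
    (herase j hj (mem_biUnion.2 ⟨i₁, mem_erase.2 ⟨hji₁.symm, hi₁⟩, hpi₁⟩)).trans
      card_erase_le
  obtain ⟨i₂, hi₂, hi₂i₁⟩ := exists_mem_ne hcover i₁
  have hsurvives : p ∈ (S.erase i₁).biUnion X :=
    mem_biUnion.2 ⟨i₂, mem_erase.2 ⟨hi₂i₁, (mem_filter.1 hi₂).1⟩, (mem_filter.1 hi₂).2⟩
  have := herase i₁ hi₁ hsurvives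
  rw [card_erase_of_mem (mem_filter.2 ⟨hi₁, hpi₁⟩)] at this
  omega

lemma exists_not_isStuck_erase (hX : ∀ i, #(X i) ≤ 3) (ht : 2 ≤ t) (hS : 2 ≤ #S) :
    ∃ i ∈ S, ¬IsStuck X t (S.erase i) := by
  by_contra! h
  have hcount := card_biUnion_mul_le hX fun p hp => three_le_card_filter_mem hS h hp
  obtain ⟨i, hi⟩ := card_pos.1 (by omega : 0 < #S)
  have hunion := (h i hi).1
  have hmono := card_le_card (biUnion_subset_biUnion_of_subset_left X (erase_subset i S))
  have := card_erase_add_one hi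
  omega

lemma exists_erase_card_biUnion_lt (hS : #(S.biUnion X) ≤ #S + t) (hns : ¬IsStuck X t S)
    (hne : S.Nonempty) : ∃ i ∈ S, #((S.erase i).biUnion X) < #S + t := by
  have hmono : ∀ i, (S.erase i).biUnion X ⊆ S.biUnion X := fun i =>
    biUnion_subset_biUnion_of_subset_left X (erase_subset i S)
  rcases hS.lt_or_eq with hlt | heq
  · obtain ⟨i, hi⟩ := hne
    exact ⟨i, hi, (card_le_card (hmono i)).trans_lt hlt⟩
  · obtain ⟨i, hi, hshrink⟩ : ∃ i ∈ S, (S.erase i).biUnion X ≠ S.biUnion X := by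
      by_contra! h
      exact hns ⟨heq, h⟩
    exact ⟨i, hi, heq ▸ card_lt_card ((hmono i).ssubset_of_ne hshrink)⟩

/-- Stuck families have `2t` members, so only for `#S = 2t + 1` must the removed member be chosen
with care; there the ground set is small enough that any removal keeps the excess at most `t`. -/
lemma exists_erase_excess_le [Fintype α] (hX : ∀ i, #(X i) ≤ 3) (ht : 2 ≤ t)
    (hα : Fintype.card α ≤ 3 * t) (hS : #(S.biUnion X) ≤ #S + t) (hns : ¬IsStuck X t S)
    (hne : S.Nonempty) :
    ∃ i ∈ S, #((S.erase i).biUnion X) ≤ #(S.erase i) + t ∧ ¬IsStuck X t (S.erase i) := by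
  by_cases hcard : #S = 2 * t + 1
  · obtain ⟨i, hi, hns'⟩ := exists_not_isStuck_erase hX ht (by omega : 2 ≤ #S)
    have := card_le_univ ((S.erase i).biUnion X)
    have := card_erase_add_one hi
    exact ⟨i, hi, by omega, hns'⟩
  · obtain ⟨i, hi, hlt⟩ := exists_erase_card_biUnion_lt hS hns hne
    have := card_erase_add_one hi
    refine ⟨i, hi, by omega, fun hstuck => hcard ?_⟩
    have := hstuck.card_eq hX hα
    omega

end Stuck

lemma List.exists_nodup_toFinset_eq_forall_take {ι : Type*} [DecidableEq ι]
    (P : Finset ι → Prop) (step : ∀ S, P S → S.Nonempty → ∃ i ∈ S, P (S.erase i))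
    (S : Finset ι) (hS : P S) :
    ∃ l : List ι, l.Nodup ∧ l.toFinset = S ∧ ∀ j, P (l.take j).toFinset := by
  induction S using Finset.strongInduction with
  | H S ih =>
    rcases S.eq_empty_or_nonempty with rfl | hne
    · exact ⟨[], List.nodup_nil, rfl, fun _ => by simpa using hS⟩
    obtain ⟨i, hi, hPi⟩ := step S hS hne
    obtain ⟨l, hnd, hl, htake⟩ := ih _ (erase_ssubset hi) hPi
    have hil : i ∉ l := fun h => notMem_erase i S (hl ▸ List.mem_toFinset.2 h)
    have hl' : (l ++ [i]).toFinset = S := by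
      rw [List.toFinset_append, hl]
      simp [insert_erase hi]
    refine ⟨l ++ [i], hnd.append (List.nodup_singleton i) (by simpa using hil), hl', fun j => ?_⟩
    rcases le_or_gt j l.length with hj | hj
    · rw [List.take_append_of_le_length hj]
      exact htake j
    · rw [List.take_of_length_le (by rw [List.length_append, List.length_singleton]; omega), hl']
      exact hS

section Delta

variable {α : Type*} [DecidableEq α] {m : ℕ} (X : Fin m → Finset α)

lemma unionUpTo_eq_biUnion_image (π : Equiv.Perm (Fin m)) (k : ℕ) :
    unionUpTo X π k = (({i : Fin m | i < k} : Finset (Fin m)).image π).biUnion X :=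
  image_biUnion.symm

lemma card_image_filter_lt (π : Equiv.Perm (Fin m)) {k : ℕ} (hk : k ≤ m) :
    #(({i : Fin m | i < k} : Finset (Fin m)).image π) = k := by
  rw [card_image_of_injective _ π.injective, Fin.card_filter_val_lt, min_eq_right hk]

lemma delta_le_DeltaPerm (π : Equiv.Perm (Fin m)) {k : ℕ} (hk1 : 1 ≤ k) (hkm : k ≤ m) :
    delta X π k ≤ DeltaPerm X π := by
  refine le_csSup (((Finset.Icc 1 m).finite_toSet.image (delta X π)).subset ?_).bddAbove
    ⟨k, hk1, hkm, rfl⟩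
  rintro _ ⟨k, hk1, hkm, rfl⟩
  exact ⟨k, Finset.mem_Icc.2 ⟨hk1, hkm⟩, rfl⟩

/-- `0 ≤ d` covers `m = 0`, where `DeltaPerm` is the junk value `sSup ∅ = 0`. -/
lemma DeltaPerm_le (π : Equiv.Perm (Fin m)) {d : ℤ} (hd : 0 ≤ d)
    (h : ∀ k, 1 ≤ k → k ≤ m → delta X π k ≤ d) : DeltaPerm X π ≤ d := by
  rcases Set.eq_empty_or_nonempty {d : ℤ | ∃ k : ℕ, 1 ≤ k ∧ k ≤ m ∧ d = delta X π k}
    with hempty | hne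
  · rw [DeltaPerm, hempty, Int.csSup_empty]
    exact hd
  · refine csSup_le hne ?_
    rintro _ ⟨k, hk1, hkm, rfl⟩
    exact h k hk1 hkm

lemma DeltaMin_le_DeltaPerm (π : Equiv.Perm (Fin m)) : DeltaMin X ≤ DeltaPerm X π := by
  refine csInf_le ((Set.finite_range (DeltaPerm X)).subset ?_).bddBelow ⟨π, rfl⟩
  rintro _ ⟨π, rfl⟩
  exact ⟨π, rfl⟩

lemma le_DeltaMin {d : ℤ} (h : ∀ π, d ≤ DeltaPerm X π) : d ≤ DeltaMin X := by
  refine le_csInf ⟨_, 1, rfl⟩ ?_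
  rintro _ ⟨π, rfl⟩
  exact h π

end Delta

lemma exists_perm_image_filter_lt_eq_take {m : ℕ} (l : List (Fin m)) (hnd : l.Nodup)
    (hl : l.toFinset = univ) :
    ∃ π : Equiv.Perm (Fin m), ∀ k : ℕ, ({i : Fin m | i < k} : Finset (Fin m)).image π
      = (l.take k).toFinset := by
  have hmem : ∀ a, a ∈ l := fun a => List.mem_toFinset.1 (hl ▸ mem_univ a)
  have hlen : l.length = m := by
    rw [← List.toFinset_card_of_nodup hnd, hl, card_univ, Fintype.card_fin]
  refine ⟨(finCongr hlen.symm).trans (hnd.getEquivOfForallMemList l hmem), fun k => ?_⟩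
  ext a
  simp only [mem_image, mem_filter, mem_univ, true_and, List.mem_toFinset,
    List.mem_take_iff_getElem, lt_min_iff]
  constructor
  · rintro ⟨i, hik, rfl⟩
    exact ⟨i, ⟨hik, hlen.symm ▸ i.2⟩, rfl⟩
  · rintro ⟨j, ⟨hjk, hjl⟩, rfl⟩
    exact ⟨⟨j, hlen ▸ hjl⟩, hjk, rfl⟩

theorem DeltaMin_le_of_card_le_three {α : Type*} [DecidableEq α] [Fintype α] {m t : ℕ}
    (X : Fin m → Finset α) (hX : ∀ i, #(X i) ≤ 3) (ht : 2 ≤ t) (hα : Fintype.card α ≤ 3 * t)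
    (hαm : Fintype.card α ≤ m) : DeltaMin X ≤ t := by
  let P : Finset (Fin m) → Prop := fun S => #(S.biUnion X) ≤ #S + t ∧ ¬IsStuck X t S
  have hstep : ∀ S, P S → S.Nonempty → ∃ i ∈ S, P (S.erase i) := fun S hS hne =>
    exists_erase_excess_le hX ht hα hS.1 hS.2 hne
  have huniv : P univ := by
    have := card_le_univ (univ.biUnion X)
    refine ⟨?_, fun h => ?_⟩
    · rw [card_univ, Fintype.card_fin]
      omega
    · have := h.1
      rw [card_univ, Fintype.card_fin] at this
      omega
  obtain ⟨l, hnd, hl, htake⟩ := List.exists_nodup_toFinset_eq_forall_take P hstep univ huniv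
  obtain ⟨π, hπ⟩ := exists_perm_image_filter_lt_eq_take l hnd hl
  refine (DeltaMin_le_DeltaPerm X π).trans (DeltaPerm_le X π (by positivity) fun k _ hkm => ?_)
  have hexcess := (htake k).1
  rw [← hπ, card_image_filter_lt π hkm] at hexcess
  rw [delta, unionUpTo_eq_biUnion_image]
  omega

theorem le_DeltaMin_of_forall_card_biUnion {α : Type*} [DecidableEq α] {m k t : ℕ}
    (X : Fin m → Finset α) (hk1 : 1 ≤ k) (hkm : k ≤ m)
    (h : ∀ T : Finset (Fin m), #T = k → k + t ≤ #(T.biUnion X)) : (t : ℤ) ≤ DeltaMin X := by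
  refine le_DeltaMin X fun π => le_trans ?_ (delta_le_DeltaPerm X π hk1 hkm)
  have := h _ (card_image_filter_lt π hkm)
  rw [delta, unionUpTo_eq_biUnion_image]
  omega

lemma le_DeltaMin_of_forall_card {α : Type*} [DecidableEq α] {m t : ℕ} (X : Fin m → Finset α)
    (hm : 1 ≤ m) (h : ∀ i, t + 1 ≤ #(X i)) : (t : ℤ) ≤ DeltaMin X := by
  refine le_DeltaMin_of_forall_card_biUnion X le_rfl hm fun T hT => ?_
  obtain ⟨i, rfl⟩ := card_eq_one.1 hT
  rw [singleton_biUnion, add_comm]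
  exact h i

lemma le_DeltaMin_of_forall_card_union {α : Type*} [DecidableEq α] {m t : ℕ}
    (X : Fin m → Finset α) (hm : 2 ≤ m) (h : ∀ i j, i ≠ j → t + 2 ≤ #(X i ∪ X j)) :
    (t : ℤ) ≤ DeltaMin X := by
  refine le_DeltaMin_of_forall_card_biUnion X one_le_two hm fun T hT => ?_
  obtain ⟨i, j, hij, rfl⟩ := card_eq_two.1 hT
  rw [biUnion_insert, singleton_biUnion, add_comm]
  exact h i j hij

lemma fFam_eq_of_le_DeltaMin {n t : ℕ} (ht : 2 ≤ t) (hn : n ≤ 3 * t)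
    (X : Fin n → Finset (Fin n)) (hX : ∀ i, #(X i) ≤ 3) (hlow : (t : ℤ) ≤ DeltaMin X) :
    fFam n n 3 = t := by
  have hupper : ∀ Y : Fin n → Finset (Fin n), (∀ i, #(Y i) ≤ 3) → DeltaMin Y ≤ t :=
    fun Y hY => DeltaMin_le_of_card_le_three Y hY ht (by simpa using hn) (by simp)
  refine IsGreatest.csSup_eq ⟨⟨X, hX, (le_antisymm (hupper X hX) hlow).symm⟩, ?_⟩
  rintro _ ⟨Y, hY, rfl⟩
  exact hupper Y hY

lemma fFam_eq_two {n : ℕ} (h4 : 4 ≤ n) (h6 : n ≤ 6) : fFam n n 3 = 2 := by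
  have hcard : #({i : Fin n | (i : ℕ) < 3} : Finset (Fin n)) = 3 := by
    rw [Fin.card_filter_val_lt]
    omega
  exact fFam_eq_of_le_DeltaMin le_rfl (by omega) (fun _ => {i | (i : ℕ) < 3})
    (fun _ => hcard.le) (le_DeltaMin_of_forall_card _ (by omega) fun _ => hcard.ge)

/-- `{0, 1, 3}` is a Sidon set modulo `n` for `n ≥ 7` (a perfect difference set for `n = 7`,
giving the Fano plane), so two distinct translates share at most one point. -/
def translatesZeroOneThree (n : ℕ) [NeZero n] (i : Fin n) : Finset (Fin n) :=
  {i, i + 1, i + 3}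

lemma fFam_eq_three {n : ℕ} (h7 : 7 ≤ n) (h9 : n ≤ 9) : fFam n n 3 = 3 := by
  interval_cases n <;>
  exact fFam_eq_of_le_DeltaMin (by norm_num) (by norm_num) (translatesZeroOneThree _)
    (by decide) (le_DeltaMin_of_forall_card_union _ (by norm_num) (by decide))

/-- For every `n` with `4 ≤ n ≤ 9`, `f(n) = ⌈n/3⌉`. -/
theorem f_small_values (n : ℕ) (h4 : 4 ≤ n) (h9 : n ≤ 9) :
    fFam n n 3 = ⌈(n : ℚ) / 3⌉ := by
  rcases le_or_gt n 6 with h6 | h7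
  · rw [fFam_eq_two h4 h6]
    interval_cases n <;> norm_num
  · rw [fFam_eq_three h7 h9]
    interval_cases n <;> norm_num
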